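/- For p ≥ 2, the constant c_p* := ((2/π^{p+1}) ∫_0^∞ |sin x/x|^p dx)^{1/p} · max_{0≤ω≤1} (sin(πω)/ω^{1−1/p}) satisfies lim_{p→∞} c_p* = 1. -/

import Mathlib

open Real MeasureTheory

/-- The constant `c_p^* = ((2/π^(p+1)) ∫_0^∞ |sin x / x|^p dx)^(1/p) ·
    max_{0 ≤ ω ≤ 1} sin(πω)/ω^(1-1/p)`. -/
noncomputable def cpstar (p : ℝ) : ℝ :=
  ((2 / Real.pi ^ (p + 1)) * ∫ x in Set.Ioi (0:ℝ), |Real.sin x / x| ^ p) ^ (1/p) *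
    sSup ((fun ω : ℝ => Real.sin (Real.pi * ω) / ω ^ (1 - 1/p)) '' Set.Icc 0 1)

open Filter Set Topology

/-! Up to the factor `(2/π)^(1/p) → 1`, `c_p^*` is `π⁻¹ · I_p^(1/p) · S_p`, with `I_p` the integral
and `S_p` the supremum. The `p`-th root `I_p^(1/p)` tends to `ess sup |sin x / x| = 1`: from above
because `I_p ≤ 1 + 1/(p-1)`, and from below because `sin x / x ≥ 1 - x²/6` gives
`I_p ≥ a (1 - a²/6)^p` for every small `a > 0`. For the supremum, `sin (πω) ≤ πω ≤ π ω^(1-1/p)`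
bounds `S_p` by `π`, while `ω = 1/p` gives `S_p ≥ π · sinc (π/p) · p^(-1/p) → π`. -/

lemma tendsto_const_rpow_one_div {a : ℝ} (ha : 0 < a) :
    Tendsto (fun p : ℝ => a ^ (1 / p)) atTop (𝓝 1) := by
  have h := (continuousAt_const_rpow (b := 0) ha.ne').tendsto.comp tendsto_inv_atTop_zero
  simpa only [Function.comp_def, rpow_zero, one_div] using h

section SinOverX

variable {p : ℝ}

lemma abs_sin_div_self_rpow_le_one (x : ℝ) (hp : 0 ≤ p) : |sin x / x| ^ p ≤ 1 := by
  refine rpow_le_one (abs_nonneg _) ?_ hp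
  rw [abs_div]
  exact div_le_one_of_le₀ abs_sin_le_abs (abs_nonneg x)

lemma abs_sin_div_self_rpow_le_rpow_neg {x : ℝ} (hx : 0 < x) (hp : 0 ≤ p) :
    |sin x / x| ^ p ≤ x ^ (-p) := by
  rw [rpow_neg hx.le, ← inv_rpow hx.le]
  refine rpow_le_rpow (abs_nonneg _) ?_ hp
  rw [abs_div, abs_of_pos hx, ← one_div]
  exact div_le_div_of_nonneg_right (abs_sin_le_one x) hx.le

lemma rpow_le_abs_sin_div_self_rpow {x : ℝ} (hx : 0 < x) (hx6 : x ^ 2 ≤ 6) (hp : 0 ≤ p) :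
    (1 - x ^ 2 / 6) ^ p ≤ |sin x / x| ^ p := by
  refine rpow_le_rpow (by linarith) (le_trans ?_ (le_abs_self _)) hp
  rw [le_div_iff₀ hx]
  nlinarith [sin_gt_sub_cube hx]

lemma measurable_abs_sin_div_self_rpow (hp : 0 ≤ p) :
    Measurable fun x : ℝ => |sin x / x| ^ p :=
  (continuous_rpow_const hp).measurable.comp (measurable_sin.div measurable_id).abs

lemma integrableOn_Ioc_abs_sin_div_self_rpow (hp : 0 ≤ p) :
    IntegrableOn (fun x : ℝ => |sin x / x| ^ p) (Ioc 0 1) :=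
  Measure.integrableOn_of_bounded (M := 1) measure_Ioc_lt_top.ne
    (measurable_abs_sin_div_self_rpow hp).aestronglyMeasurable
    (Eventually.of_forall fun x => by
      rw [norm_of_nonneg (by positivity)]
      exact abs_sin_div_self_rpow_le_one x hp)

lemma integrableOn_Ioi_abs_sin_div_self_rpow (hp : 1 < p) :
    IntegrableOn (fun x : ℝ => |sin x / x| ^ p) (Ioi 1) := by
  refine (integrableOn_Ioi_rpow_of_lt (neg_lt_neg hp) one_pos).mono'
    (measurable_abs_sin_div_self_rpow (by linarith)).aestronglyMeasurable ?_
  filter_upwards [ae_restrict_mem measurableSet_Ioi] with x (hx : 1 < x)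
  rw [norm_of_nonneg (by positivity)]
  exact abs_sin_div_self_rpow_le_rpow_neg (by linarith) (by linarith)

lemma integrableOn_abs_sin_div_self_rpow (hp : 1 < p) :
    IntegrableOn (fun x : ℝ => |sin x / x| ^ p) (Ioi 0) := by
  rw [← Ioc_union_Ioi_eq_Ioi zero_le_one]
  exact (integrableOn_Ioc_abs_sin_div_self_rpow (by linarith)).union
    (integrableOn_Ioi_abs_sin_div_self_rpow hp)

lemma integral_abs_sin_div_self_rpow_le (hp : 1 < p) :
    ∫ x in Ioi 0, |sin x / x| ^ p ≤ 1 + 1 / (p - 1) := by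
  have hp0 : 0 ≤ p := by linarith
  have h01 : ∫ x in Ioc 0 1, |sin x / x| ^ p ≤ ∫ _ in Ioc (0 : ℝ) 1, 1 :=
    setIntegral_mono_on (integrableOn_Ioc_abs_sin_div_self_rpow hp0)
      (integrableOn_const measure_Ioc_lt_top.ne enorm_ne_top) measurableSet_Ioc
      fun x _ => abs_sin_div_self_rpow_le_one x hp0
  have h1 : ∫ x in Ioi 1, |sin x / x| ^ p ≤ ∫ x in Ioi (1 : ℝ), x ^ (-p) :=
    setIntegral_mono_on (integrableOn_Ioi_abs_sin_div_self_rpow hp)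
      (integrableOn_Ioi_rpow_of_lt (neg_lt_neg hp) one_pos) measurableSet_Ioi
      fun x (hx : 1 < x) => abs_sin_div_self_rpow_le_rpow_neg (by linarith) hp0
  rw [← Ioc_union_Ioi_eq_Ioi zero_le_one, setIntegral_union (Ioc_disjoint_Ioi le_rfl)
    measurableSet_Ioi (integrableOn_Ioc_abs_sin_div_self_rpow hp0)
    (integrableOn_Ioi_abs_sin_div_self_rpow hp)]
  rw [integral_Ioi_rpow_of_lt (neg_lt_neg hp) one_pos] at h1
  rw [setIntegral_const, smul_eq_mul, mul_one, Real.volume_real_Ioc_of_le zero_le_one] at h01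
  have : -(1 : ℝ) ^ (-p + 1) / (-p + 1) = 1 / (p - 1) := by
    rw [one_rpow, neg_div, ← div_neg, neg_add', neg_neg]
  linarith

lemma mul_rpow_le_integral_abs_sin_div_self_rpow (hp : 1 < p) {a : ℝ} (ha : 0 < a)
    (ha6 : a ^ 2 ≤ 6) : a * (1 - a ^ 2 / 6) ^ p ≤ ∫ x in Ioi 0, |sin x / x| ^ p := by
  have hp0 : 0 ≤ p := by linarith
  calc a * (1 - a ^ 2 / 6) ^ p = ∫ _ in Ioc 0 a, (1 - a ^ 2 / 6) ^ p := by
        rw [setIntegral_const, smul_eq_mul, Real.volume_real_Ioc_of_le ha.le, sub_zero]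
    _ ≤ ∫ x in Ioc 0 a, |sin x / x| ^ p :=
        setIntegral_mono_on (integrableOn_const measure_Ioc_lt_top.ne enorm_ne_top)
          ((integrableOn_abs_sin_div_self_rpow hp).mono_set Ioc_subset_Ioi_self)
          measurableSet_Ioc fun x hx =>
            (rpow_le_rpow (by linarith) (by nlinarith [hx.1, hx.2]) hp0).trans
              (rpow_le_abs_sin_div_self_rpow hx.1 (by nlinarith [hx.1, hx.2]) hp0)
    _ ≤ ∫ x in Ioi 0, |sin x / x| ^ p :=
        setIntegral_mono_set (integrableOn_abs_sin_div_self_rpow hp)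
          (Eventually.of_forall fun x => by positivity)
          (Eventually.of_forall Ioc_subset_Ioi_self)

end SinOverX

lemma tendsto_integral_abs_sin_div_self_rpow_rpow_one_div :
    Tendsto (fun p : ℝ => (∫ x in Ioi 0, |sin x / x| ^ p) ^ (1 / p)) atTop (𝓝 1) := by
  refine tendsto_order.2 ⟨fun c hc => ?_, fun c hc => ?_⟩
  · set a := min 1 (1 - c)
    have ha : 0 < a := lt_min one_pos (by linarith)
    have ha1 : a ≤ 1 := min_le_left _ _
    have hac : c < 1 - a ^ 2 / 6 := by nlinarith [min_le_right 1 (1 - c)]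
    have hb : 0 ≤ 1 - a ^ 2 / 6 := by nlinarith
    have hlim := (tendsto_const_rpow_one_div ha).mul_const (1 - a ^ 2 / 6)
    rw [one_mul] at hlim
    filter_upwards [hlim.eventually (eventually_gt_nhds hac), eventually_gt_atTop 1]
      with p hcp hp
    refine hcp.trans_le ?_
    calc a ^ (1 / p) * (1 - a ^ 2 / 6) = (a * (1 - a ^ 2 / 6) ^ p) ^ (1 / p) := by
          rw [mul_rpow ha.le (rpow_nonneg hb p), one_div, rpow_rpow_inv hb (by linarith)]
      _ ≤ _ := rpow_le_rpow (mul_nonneg ha.le (rpow_nonneg hb p))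
          (mul_rpow_le_integral_abs_sin_div_self_rpow hp ha (by nlinarith)) (by positivity)
  · filter_upwards [(tendsto_const_rpow_one_div two_pos).eventually (eventually_lt_nhds hc),
      eventually_ge_atTop 2] with p hcp hp
    refine lt_of_le_of_lt (rpow_le_rpow (integral_nonneg fun x => by positivity) ?_
      (by positivity)) hcp
    have := integral_abs_sin_div_self_rpow_le (by linarith : 1 < p)
    have : 1 / (p - 1) ≤ 1 := by rw [div_le_one] <;> linarith
    linarith

lemma div_rpow_add_one_rpow_one_div {a b p : ℝ} (ha : 0 ≤ a) (hb : 0 < b) (hp : p ≠ 0) :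
    (a / b ^ (p + 1)) ^ (1 / p) = (a / b) ^ (1 / p) * b⁻¹ := by
  rw [rpow_add_one hb.ne', div_mul_eq_div_div_swap, div_eq_mul_inv (a / b),
    mul_rpow (by positivity) (by positivity), inv_rpow (by positivity), one_div,
    rpow_rpow_inv hb.le hp]

lemma tendsto_div_rpow_add_one_rpow_one_div {a b : ℝ} (ha : 0 < a) (hb : 0 < b) :
    Tendsto (fun p : ℝ => (a / b ^ (p + 1)) ^ (1 / p)) atTop (𝓝 b⁻¹) := by
  have h := (tendsto_const_rpow_one_div (div_pos ha hb)).mul_const b⁻¹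
  rw [one_mul] at h
  refine h.congr' ?_
  filter_upwards [eventually_ne_atTop 0] with p hp
  exact (div_rpow_add_one_rpow_one_div ha.le hb hp).symm

lemma sin_pi_mul_div_rpow_le_pi {ω s : ℝ} (hω : ω ∈ Icc (0 : ℝ) 1) (hs : s ≤ 1) :
    sin (π * ω) / ω ^ s ≤ π := by
  rcases hω.1.eq_or_lt with rfl | hω0
  · simp [pi_pos.le]
  rw [div_le_iff₀ (rpow_pos_of_pos hω0 s)]
  calc sin (π * ω) ≤ π * ω := sin_le (by positivity)
    _ = π * ω ^ (1 : ℝ) := by rw [rpow_one]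
    _ ≤ π * ω ^ s := mul_le_mul_of_nonneg_left (rpow_le_rpow_of_exponent_ge hω0 hω.2 hs) pi_pos.le

lemma pi_mem_upperBounds_sin_pi_mul_div_rpow {s : ℝ} (hs : s ≤ 1) :
    π ∈ upperBounds ((fun ω : ℝ => sin (π * ω) / ω ^ s) '' Icc 0 1) :=
  forall_mem_image.2 fun _ hω => sin_pi_mul_div_rpow_le_pi hω hs

lemma tendsto_sin_pi_mul_one_div_div_rpow :
    Tendsto (fun p : ℝ => sin (π * (1 / p)) / (1 / p) ^ (1 - 1 / p)) atTop (𝓝 π) := by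
  have hsinc : Tendsto (fun p : ℝ => sinc (π * p⁻¹)) atTop (𝓝 1) := by
    have h0 := tendsto_inv_atTop_zero.const_mul π
    rw [mul_zero] at h0
    simpa only [Function.comp_def, sinc_zero] using (continuous_sinc.tendsto 0).comp h0
  have h := (hsinc.const_mul π).mul tendsto_rpow_neg_div
  rw [mul_one, mul_one] at h
  refine h.congr' ?_
  filter_upwards [eventually_gt_atTop 0] with p hp
  rw [sinc_of_ne_zero (by positivity), one_div, sub_eq_add_neg, rpow_add (by positivity),
    rpow_one, inv_rpow hp.le, ← rpow_neg hp.le, neg_neg, neg_div, rpow_neg hp.le, one_div]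
  field_simp

lemma tendsto_sSup_sin_pi_mul_div_rpow :
    Tendsto (fun p : ℝ => sSup ((fun ω : ℝ => sin (π * ω) / ω ^ (1 - 1 / p)) '' Icc 0 1))
      atTop (𝓝 π) := by
  refine tendsto_of_tendsto_of_tendsto_of_le_of_le' tendsto_sin_pi_mul_one_div_div_rpow
    tendsto_const_nhds ?_ ?_
  · filter_upwards [eventually_ge_atTop 1] with p hp
    have hp0 : 0 ≤ 1 / p := one_div_nonneg.2 (by linarith)
    have hp1 : 1 / p ≤ 1 := by rw [div_le_one] <;> linarith
    exact le_csSup ⟨π, pi_mem_upperBounds_sin_pi_mul_div_rpow (sub_le_self 1 hp0)⟩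
      (mem_image_of_mem _ ⟨hp0, hp1⟩)
  · filter_upwards [eventually_ge_atTop 0] with p hp
    exact csSup_le ((nonempty_Icc.2 zero_le_one).image _)
      (pi_mem_upperBounds_sin_pi_mul_div_rpow (sub_le_self 1 (one_div_nonneg.2 hp)))

theorem stmt_14 : Filter.Tendsto cpstar Filter.atTop (nhds 1) := by
  have h := ((tendsto_div_rpow_add_one_rpow_one_div two_pos pi_pos).mul
    tendsto_integral_abs_sin_div_self_rpow_rpow_one_div).mul tendsto_sSup_sin_pi_mul_div_rpow
  rw [mul_one, inv_mul_cancel₀ pi_ne_zero] at h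
  refine h.congr fun p => ?_
  rw [cpstar, mul_rpow (by positivity) (integral_nonneg fun x => by positivity)]
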